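/- Let k ≥ 1, m = 2k + 1, and let e ≥ 1 be an integer with gcd(e, m) = 1. Let F = 𝔽_{2^m}, let f : F → 𝔽₂ be f(x) = Tr(x^{2^e + 1}), and let S = supp(f) = {x ∈ F : f(x) = 1}. Then |S| = 2^{2k}. Let G = 𝔽₂ × F and S' = {(ε, z) ∈ G : ε ∈ 𝔽₂, z ∈ S}, and set a = (0, 0), b = (1, 1), c = (0, 1), d = (1, 0) in G. Then the cubelike graph Γ = Cay(G, S') has PEST from the edge (a,b) to the edge (c,d) at time π/2^{k+1}. -/

import Mathlib

open Matrix Finset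

noncomputable section

noncomputable instance (m : ℕ) : Fintype (GaloisField 2 m) := Fintype.ofFinite _
noncomputable instance (m : ℕ) : DecidableEq (GaloisField 2 m) := Classical.decEq _

/-- The absolute trace map `Tr : 𝔽_{2^m} → 𝔽₂`. -/
def Ftr {m : ℕ} (x : GaloisField 2 m) : ZMod 2 :=
  Algebra.trace (ZMod 2) (GaloisField 2 m) x

/-- The adjacency matrix of the Cayley (cubelike) graph `Cay(G, S)`. -/
def adjMatrix {G : Type*} [AddCommGroup G] [Fintype G] [DecidableEq G]
    (S : Finset G) : Matrix G G ℂ :=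
  fun u v => if u + v ∈ S then 1 else 0

/-- The transfer matrix `H(t) = exp(i t A)`. -/
def transferMatrix {G : Type*} [AddCommGroup G] [Fintype G] [DecidableEq G]
    (S : Finset G) (t : ℝ) : Matrix G G ℂ :=
  NormedSpace.exp (Complex.I • ((t : ℂ) • adjMatrix S))

/-- The standard basis vector `e_a` of `ℂ^V`. -/
def stdBasis {G : Type*} [DecidableEq G] (a : G) : G → ℂ :=
  fun v => if v = a then 1 else 0

/-- Perfect edge state transfer from the edge `(a,b)` to the edge `(c,d)` at time `t`:
`|(1/2)(e_c - e_d)ᵀ H(t)(e_a - e_b)|² = 1`. -/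
def hasPEST {G : Type*} [AddCommGroup G] [Fintype G] [DecidableEq G]
    (S : Finset G) (a b c d : G) (t : ℝ) : Prop :=
  ‖(1 / 2 : ℂ) * dotProduct (stdBasis c - stdBasis d)
      (transferMatrix S t *ᵥ (stdBasis a - stdBasis b))‖ ^ 2 = 1

/-- The eigenvalue `λ_x = ∑_{s ∈ S} (-1)^{Tr(xs)}` of a cubelike graph on `𝔽_{2^m}`. -/
def lamF {m : ℕ} (S : Finset (GaloisField 2 m)) (x : GaloisField 2 m) : ℤ :=
  ∑ s ∈ S, (-1) ^ (Ftr (x * s)).val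

/-!
The characters `χ_{(δ,y)}(ε, x) = (-1)^{δε + Tr(yx)}` diagonalise every cubelike graph on
`𝔽₂ × 𝔽_{2^m}`, so `H(t)_{u,v} = 2^{-(m+1)} ∑_g χ_g(u + v) e^{itΛ_g}`, where `Λ_g` is the
character sum of the connection set. For `S' = 𝔽₂ × S` one has `Λ_{(0,y)} = 2λ_y` and `Λ_{(1,y)} = 0`, and the
amplitude from `(a,b)` to `(c,d)` is an average over `y` of terms that all equal `1` as soon as
`e^{2itλ_y} = -1` whenever `Tr(y) = 1`.

The Gold function `x^{2^e+1}` is semi-bent for odd `m`: squaring its Walsh transform `W` and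
substituting `y = x + w` leaves a sum over the radical `{w : w^{2^{-e}} = w^{2^e}} = 𝔽₂` of the
associated bilinear form, so `W(a)² = 2^m (1 + (-1)^{Tr(1+a)})`. Since `W(a) = 2^m [a = 0] - 2λ_a`
and `Tr(1) = 1`, this gives `|S| = 2^{m-1}` and `λ_y = ±2^k` for `Tr(y) = 1`, whence
`e^{2itλ_y} = e^{±iπ} = -1` at `t = π/2^{k+1}`.
-/

section TraceCharacter

variable {m : ℕ}

lemma card_galoisField (hm : m ≠ 0) : Fintype.card (GaloisField 2 m) = 2 ^ m := by
  rw [Fintype.card_eq_nat_card, GaloisField.card 2 m hm]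

lemma isPeriodicPt_frobenius (hm : m ≠ 0) (x : GaloisField 2 m) :
    Function.IsPeriodicPt (frobenius (GaloisField 2 m) 2) m x := by
  have h := FiniteField.pow_card x
  rw [card_galoisField hm] at h
  rw [Function.IsPeriodicPt, Function.IsFixedPt, iterate_frobenius, h]

lemma Ftr_add (x y : GaloisField 2 m) : Ftr (x + y) = Ftr x + Ftr y := map_add _ x y

lemma Ftr_pow_two_pow (x : GaloisField 2 m) (n : ℕ) : Ftr (x ^ 2 ^ n) = Ftr x := by
  have h := Algebra.trace_eq_of_algEquiv
    (FiniteField.frobeniusAlgEquivOfAlgebraic (ZMod 2) (GaloisField 2 m) ^ n) x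
  rwa [AlgEquiv.coe_pow, FiniteField.coe_frobeniusAlgEquivOfAlgebraic_iterate, ZMod.card] at h

lemma Ftr_pow_two_pow_mul (hm : m ≠ 0) (e : ℕ) (x w : GaloisField 2 m) :
    Ftr (x ^ 2 ^ e * w) = Ftr (x * w ^ 2 ^ ((m - 1) * e)) := by
  have hx : x ^ 2 ^ (m * e) = x := by
    rw [← iterate_frobenius]
    exact (isPeriodicPt_frobenius hm x).mul_const e
  rw [← Ftr_pow_two_pow _ ((m - 1) * e), mul_pow, ← pow_mul, ← pow_add, add_comm, ← add_one_mul,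
    Nat.sub_one_add_one hm, hx]

lemma Ftr_one (hm : Odd m) : Ftr (1 : GaloisField 2 m) = 1 := by
  rw [Ftr, ← map_one (algebraMap (ZMod 2) (GaloisField 2 m)), Algebra.trace_algebraMap,
    GaloisField.finrank 2 hm.pos.ne', nsmul_eq_mul, mul_one, ZMod.natCast_eq_one_iff_odd]
  exact hm

lemma exists_Ftr_eq_one : ∃ z : GaloisField 2 m, Ftr z = 1 :=
  Algebra.trace_surjective (ZMod 2) (GaloisField 2 m) 1

def traceChar (m : ℕ) (K : Type*) [CommRing K] : AddChar (GaloisField 2 m) K :=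
  (AddChar.zmodChar 2 neg_one_sq).compAddMonoidHom
    (Algebra.trace (ZMod 2) (GaloisField 2 m)).toAddMonoidHom

variable {K : Type*} [CommRing K]

lemma traceChar_apply (x : GaloisField 2 m) : traceChar m K x = (-1) ^ (Ftr x).val := rfl

lemma traceChar_eq_ite (x : GaloisField 2 m) :
    traceChar m K x = if Ftr x = 1 then -1 else 1 := by
  rw [traceChar_apply]
  rcases (by decide : ∀ a : ZMod 2, a = 0 ∨ a = 1) (Ftr x) with h | h <;> simp [h, ZMod.val_one]

lemma traceChar_congr {x y : GaloisField 2 m} (h : Ftr x = Ftr y) :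
    traceChar m K x = traceChar m K y := by
  rw [traceChar_apply, traceChar_apply, h]

lemma isPrimitive_traceChar [CharZero K] : (traceChar m K).IsPrimitive := by
  obtain ⟨z, hz⟩ := exists_Ftr_eq_one (m := m)
  refine AddChar.IsPrimitive.of_ne_one (AddChar.ne_one_iff.2 ⟨z, ?_⟩)
  rw [traceChar_eq_ite, if_pos hz]
  norm_num

lemma sum_traceChar_mul [IsDomain K] [CharZero K] (hm : m ≠ 0) (c : GaloisField 2 m) :
    ∑ x, traceChar m K (x * c) = if c = 0 then 2 ^ m else 0 := by
  rw [AddChar.sum_mulShift c isPrimitive_traceChar, card_galoisField hm]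
  push_cast
  rfl

lemma sum_traceChar_add_mul [IsDomain K] [CharZero K] (hm : m ≠ 0)
    (Q : GaloisField 2 m → GaloisField 2 m) (a : GaloisField 2 m) :
    ∑ x, traceChar m K (Q x + a * x)
      = (if a = 0 then 2 ^ m else 0)
        - 2 * ∑ x ∈ univ.filter (fun x => Ftr (Q x) = 1), traceChar m K (a * x) := by
  have hterm : ∀ x, traceChar m K (Q x + a * x)
      = traceChar m K (x * a) - 2 * if Ftr (Q x) = 1 then traceChar m K (a * x) else 0 := by
    intro x
    rw [AddChar.map_add_eq_mul, traceChar_eq_ite, mul_comm x a]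
    split_ifs <;> ring
  rw [sum_congr rfl fun x _ => hterm x, sum_sub_distrib, ← mul_sum, sum_traceChar_mul hm,
    sum_filter]

end TraceCharacter

namespace AddChar

variable {A B M : Type*}

def coprod [AddMonoid A] [AddMonoid B] [CommMonoid M] (ψ : AddChar A M) (φ : AddChar B M) :
    AddChar (A × B) M where
  toFun u := ψ u.1 * φ u.2
  map_zero_eq_one' := by simp
  map_add_eq_mul' u v := by
    simp only [Prod.fst_add, Prod.snd_add, map_add_eq_mul, mul_mul_mul_comm]

@[simp] lemma coprod_apply [AddMonoid A] [AddMonoid B] [CommMonoid M] (ψ : AddChar A M)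
    (φ : AddChar B M) (u : A × B) : ψ.coprod φ u = ψ u.1 * φ u.2 := rfl

lemma IsPrimitive.coprod [CommRing A] [CommRing B] [CommMonoid M] {ψ : AddChar A M}
    {φ : AddChar B M} (hψ : ψ.IsPrimitive) (hφ : φ.IsPrimitive) : (ψ.coprod φ).IsPrimitive := by
  rintro ⟨a, b⟩ hab
  rw [ne_one_iff]
  by_cases ha : a = 0
  · have hb : b ≠ 0 := by rintro rfl; exact hab (by rw [ha]; rfl)
    obtain ⟨y, hy⟩ := ne_one_iff.1 (hφ hb)
    exact ⟨(0, y), by simpa using hy⟩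
  · obtain ⟨x, hx⟩ := ne_one_iff.1 (hψ ha)
    exact ⟨(x, 0), by simpa using hx⟩

end AddChar

section Gold

variable {m : ℕ}

lemma add_pow_two_pow_succ {R : Type*} [CommRing R] [CharP R 2] (x w : R) (e : ℕ) :
    (x + w) ^ (2 ^ e + 1)
      = x ^ (2 ^ e + 1) + w ^ (2 ^ e + 1) + (x ^ 2 ^ e * w + x * w ^ 2 ^ e) := by
  rw [pow_succ, add_pow_char_pow]
  ring

/-- `w ^ 2 ^ ((m - 1) * e) = w ^ 2 ^ (-e)`, so the left side vanishes exactly on the radical of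
the trace form `Tr(x^{2^e} w + x w^{2^e})`. -/
lemma gold_radical (hm : Odd m) {e : ℕ} (he : Nat.Coprime e m) (w : GaloisField 2 m) :
    w ^ 2 ^ ((m - 1) * e) + w ^ 2 ^ e = 0 ↔ w = 0 ∨ w = 1 := by
  have hm0 := hm.pos.ne'
  constructor
  · intro h
    have h2e : Function.IsPeriodicPt (frobenius (GaloisField 2 m) 2) (2 * e) w := by
      have hme := (isPeriodicPt_frobenius hm0 w).mul_const e
      rw [Function.IsPeriodicPt, Function.IsFixedPt, iterate_frobenius] at hme ⊢
      rw [two_mul, pow_add, pow_mul, ← CharTwo.add_eq_zero.1 h, ← pow_mul, ← pow_add,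
        ← add_one_mul, Nat.sub_one_add_one hm0, hme]
    have h1 := h2e.gcd (isPeriodicPt_frobenius hm0 w)
    rw [Nat.Coprime.mul_left (Nat.coprime_two_left.2 hm) he, Function.IsPeriodicPt,
      Function.IsFixedPt, iterate_frobenius, pow_one, sq] at h1
    exact IsIdempotentElem.iff_eq_zero_or_one.1 h1
  · rintro (rfl | rfl) <;> simp [CharTwo.add_self_eq_zero]

variable {K : Type*} [CommRing K]

lemma traceChar_gold_mul_gold_add (hm : m ≠ 0) (e : ℕ) (a x w : GaloisField 2 m) :
    traceChar m K (x ^ (2 ^ e + 1) + a * x)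
        * traceChar m K ((x + w) ^ (2 ^ e + 1) + a * (x + w))
      = traceChar m K (x * (w ^ 2 ^ ((m - 1) * e) + w ^ 2 ^ e))
        * traceChar m K (w ^ (2 ^ e + 1) + a * w) := by
  have harg : x ^ (2 ^ e + 1) + a * x + ((x + w) ^ (2 ^ e + 1) + a * (x + w))
      = (x ^ 2 ^ e * w + x * w ^ 2 ^ e) + (w ^ (2 ^ e + 1) + a * w) := by
    rw [add_pow_two_pow_succ]
    linear_combination (x ^ (2 ^ e + 1) + a * x) * CharTwo.two_eq_zero (R := GaloisField 2 m)
  rw [← AddChar.map_add_eq_mul, harg, AddChar.map_add_eq_mul]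
  congr 1
  apply traceChar_congr
  rw [Ftr_add, Ftr_pow_two_pow_mul hm, mul_add, Ftr_add]

lemma sum_traceChar_gold_sq [IsDomain K] [CharZero K] (hm : Odd m) {e : ℕ}
    (he : Nat.Coprime e m) (a : GaloisField 2 m) :
    (∑ x, traceChar m K (x ^ (2 ^ e + 1) + a * x)) ^ 2
      = 2 ^ m * (1 + traceChar m K (1 + a)) := by
  have hm0 := hm.pos.ne'
  have hrad : univ.filter (fun w : GaloisField 2 m => w ^ 2 ^ ((m - 1) * e) + w ^ 2 ^ e = 0)
      = {0, 1} := by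
    ext w
    simp [gold_radical hm he]
  calc (∑ x, traceChar m K (x ^ (2 ^ e + 1) + a * x)) ^ 2
      = ∑ x, ∑ w, traceChar m K (x ^ (2 ^ e + 1) + a * x)
          * traceChar m K ((x + w) ^ (2 ^ e + 1) + a * (x + w)) := by
        rw [sq, sum_mul_sum]
        refine sum_congr rfl fun x _ => ?_
        exact (Fintype.sum_equiv (Equiv.addLeft x) _ _ fun w => rfl).symm
    _ = ∑ w, (∑ x, traceChar m K (x * (w ^ 2 ^ ((m - 1) * e) + w ^ 2 ^ e)))
          * traceChar m K (w ^ (2 ^ e + 1) + a * w) := by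
        simp_rw [traceChar_gold_mul_gold_add hm0, sum_mul]
        exact sum_comm
    _ = ∑ w ∈ {0, 1}, 2 ^ m * traceChar m K (w ^ (2 ^ e + 1) + a * w) := by
        simp_rw [sum_traceChar_mul hm0, ite_mul, zero_mul]
        rw [← sum_filter, hrad]
    _ = 2 ^ m * (1 + traceChar m K (1 + a)) := by
        rw [sum_pair zero_ne_one, ← mul_add]
        simp

def goldSupport (m e : ℕ) : Finset (GaloisField 2 m) :=
  univ.filter fun x => Ftr (x ^ (2 ^ e + 1)) = 1

lemma sum_traceChar_gold_eq_sub_lamF (hm : m ≠ 0) (e : ℕ) (a : GaloisField 2 m) :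
    ∑ x, traceChar m ℤ (x ^ (2 ^ e + 1) + a * x)
      = (if a = 0 then 2 ^ m else 0) - 2 * lamF (goldSupport m e) a :=
  sum_traceChar_add_mul hm _ a

lemma two_mul_card_goldSupport (hm : Odd m) {e : ℕ} (he : Nat.Coprime e m) :
    2 * (goldSupport m e).card = 2 ^ m := by
  have hsq := sum_traceChar_gold_sq (K := ℤ) hm he 0
  rw [add_zero, traceChar_eq_ite, if_pos (Ftr_one hm), add_neg_cancel, mul_zero,
    sq_eq_zero_iff, sum_traceChar_gold_eq_sub_lamF hm.pos.ne', if_pos rfl, sub_eq_zero] at hsq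
  have hlam : lamF (goldSupport m e) 0 = (goldSupport m e).card := by simp [lamF, Ftr]
  exact_mod_cast (hlam ▸ hsq).symm

lemma two_mul_lamF_goldSupport_sq (hm : Odd m) {e : ℕ} (he : Nat.Coprime e m)
    {y : GaloisField 2 m} (hy : Ftr y = 1) :
    2 * lamF (goldSupport m e) y ^ 2 = 2 ^ m := by
  have hy0 : y ≠ 0 := by rintro rfl; simp [Ftr] at hy
  have hsq := sum_traceChar_gold_sq (K := ℤ) hm he y
  rw [AddChar.map_add_eq_mul, traceChar_eq_ite, traceChar_eq_ite, if_pos (Ftr_one hm), if_pos hy,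
    sum_traceChar_gold_eq_sub_lamF hm.pos.ne', if_neg hy0] at hsq
  exact mul_left_cancel₀ two_ne_zero (by linear_combination hsq)

end Gold
section CayleyTransfer

variable {R : Type*} [CommRing R] [Fintype R] [DecidableEq R] [CharP R 2]

def charMatrix (ψ : AddChar R ℂ) : Matrix R R ℂ := Matrix.of fun u v => ψ (u * v)

lemma charMatrix_mul_self {ψ : AddChar R ℂ} (hψ : ψ.IsPrimitive) :
    charMatrix ψ * charMatrix ψ = (Fintype.card R : ℂ) • 1 := by
  ext u v
  simp_rw [charMatrix, mul_apply, of_apply, ← AddChar.map_add_eq_mul, mul_comm u, ← mul_add,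
    AddChar.sum_mulShift _ hψ, CharTwo.add_eq_zero, Matrix.smul_apply, one_apply]
  split_ifs <;> simp

lemma adjMatrix_mul_charMatrix (S : Finset R) (ψ : AddChar R ℂ) :
    adjMatrix S * charMatrix ψ = charMatrix ψ * diagonal fun g => ∑ s ∈ S, ψ (g * s) := by
  ext u g
  rw [mul_diagonal, mul_apply]
  simp only [adjMatrix, charMatrix, of_apply, boole_mul]
  rw [Fintype.sum_equiv (Equiv.addLeft u) _ (fun s => if s ∈ S then ψ ((u + s) * g) else 0)
    fun v => by simp [← add_assoc, CharTwo.add_self_eq_zero], sum_ite_mem, univ_inter, mul_sum]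
  simp_rw [add_mul, AddChar.map_add_eq_mul, mul_comm g]

lemma transferMatrix_apply (S : Finset R) {ψ : AddChar R ℂ} (hψ : ψ.IsPrimitive) (t : ℝ)
    (u v : R) :
    transferMatrix S t u v = (Fintype.card R : ℂ)⁻¹
      * ∑ g, ψ (g * (u + v)) * Complex.exp (Complex.I * t * ∑ s ∈ S, ψ (g * s)) := by
  set P := charMatrix ψ
  have hN : (Fintype.card R : ℂ) ≠ 0 := Nat.cast_ne_zero.2 Fintype.card_ne_zero
  have hleft : ((Fintype.card R : ℂ)⁻¹ • P) * P = 1 := by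
    rw [smul_mul, charMatrix_mul_self hψ, smul_smul, inv_mul_cancel₀ hN, one_smul]
  have hP : IsUnit P := (isUnit_iff_isUnit_det P).2 (isUnit_det_of_left_inverse hleft)
  have hA : adjMatrix S = P * diagonal (fun g => ∑ s ∈ S, ψ (g * s)) * P⁻¹ := by
    rw [← adjMatrix_mul_charMatrix, mul_assoc, mul_nonsing_inv _ ((isUnit_iff_isUnit_det P).1 hP),
      mul_one]
  have hexp : transferMatrix S t
      = P * diagonal (fun g => Complex.exp (Complex.I * t * ∑ s ∈ S, ψ (g * s))) * P⁻¹ := by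
    have hconj : Complex.I • (t : ℂ) • adjMatrix S
        = P * diagonal ((Complex.I * t) • fun g => ∑ s ∈ S, ψ (g * s)) * P⁻¹ := by
      rw [hA, diagonal_smul, smul_smul]
      simp only [Matrix.mul_smul, Matrix.smul_mul]
    rw [transferMatrix, hconj, exp_conj _ _ hP, exp_diagonal, Pi.exp_def, Complex.exp_eq_exp_ℂ]
    rfl
  rw [hexp, inv_eq_left_inv hleft, Matrix.mul_smul, Matrix.smul_apply, mul_apply, smul_eq_mul]
  congr 1
  refine sum_congr rfl fun g _ => ?_
  rw [mul_diagonal]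
  simp only [P, charMatrix, of_apply]
  rw [mul_add, AddChar.map_add_eq_mul, mul_comm g u]
  ring

end CayleyTransfer

lemma stdBasis_eq_piSingle {G : Type*} [DecidableEq G] (a : G) :
    _root_.stdBasis a = Pi.single a 1 := by
  funext v; simp [_root_.stdBasis, Pi.single_apply]

lemma stdBasis_sub_dotProduct_mulVec {G : Type*} [Fintype G] [DecidableEq G]
    (M : Matrix G G ℂ) (a b c d : G) :
    (_root_.stdBasis c - _root_.stdBasis d) ⬝ᵥ (M *ᵥ (_root_.stdBasis a - _root_.stdBasis b))
      = M c a - M c b - (M d a - M d b) := by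
  simp [stdBasis_eq_piSingle, mulVec_sub, sub_dotProduct, dotProduct_sub]
  ring

section LiftedGraph

variable {m : ℕ}

def prodTraceChar (m : ℕ) : AddChar (ZMod 2 × GaloisField 2 m) ℂ :=
  (AddChar.zmodChar 2 neg_one_sq).coprod (traceChar m ℂ)

lemma isPrimitive_zmodChar_two : (AddChar.zmodChar 2 (neg_one_sq (R := ℂ))).IsPrimitive := by
  refine AddChar.IsPrimitive.of_ne_one (AddChar.ne_one_iff.2 ⟨1, ?_⟩)
  rw [AddChar.zmodChar_apply, ZMod.val_one]
  norm_num

lemma isPrimitive_prodTraceChar : (prodTraceChar m).IsPrimitive :=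
  isPrimitive_zmodChar_two.coprod isPrimitive_traceChar

lemma sum_prodTraceChar_mul_univ_prod (S : Finset (GaloisField 2 m)) (δ : ZMod 2)
    (y : GaloisField 2 m) :
    ∑ s ∈ univ ×ˢ S, prodTraceChar m ((δ, y) * s)
      = (if δ = 0 then 2 else 0) * (lamF S y : ℂ) := by
  simp only [prodTraceChar, sum_product, Prod.mk_mul_mk, AddChar.coprod_apply]
  rw [← sum_mul_sum]
  congr 1
  · simp_rw [mul_comm δ]
    rw [AddChar.sum_mulShift δ isPrimitive_zmodChar_two, ZMod.card]
    norm_num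
  · simp [lamF, traceChar_apply]

lemma sum_zmod_two_amplitude_eq_two (S : Finset (GaloisField 2 m)) {t : ℝ}
    (hS : ∀ y, Ftr y = 1 → Complex.exp (Complex.I * t * (2 * lamF S y)) = -1)
    (y : GaloisField 2 m) :
    ∑ δ : ZMod 2, (prodTraceChar m ((δ, y) * (0, 1)) - prodTraceChar m ((δ, y) * (1, 0)))
      * Complex.exp (Complex.I * t * ∑ s ∈ univ ×ˢ S, prodTraceChar m ((δ, y) * s)) = 2 := by
  simp_rw [sum_prodTraceChar_mul_univ_prod]
  rw [(by decide : (univ : Finset (ZMod 2)) = {0, 1}), sum_pair zero_ne_one]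
  simp only [prodTraceChar, Prod.mk_mul_mk, AddChar.coprod_apply, mul_zero, mul_one,
    AddChar.map_zero_eq_one, AddChar.zmodChar_apply, ZMod.val_one, if_pos, if_neg one_ne_zero]
  by_cases hy : Ftr y = 1
  · rw [hS y hy, traceChar_eq_ite, if_pos hy]
    norm_num
  · rw [traceChar_eq_ite, if_neg hy]
    norm_num

lemma hasPEST_univ_prod (hm : m ≠ 0) (S : Finset (GaloisField 2 m)) {t : ℝ}
    (hS : ∀ y, Ftr y = 1 → Complex.exp (Complex.I * t * (2 * lamF S y)) = -1) :
    hasPEST (univ ×ˢ S) ((0 : ZMod 2), (0 : GaloisField 2 m)) (1, 1) (0, 1) (1, 0) t := by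
  have hsum : ∑ g, prodTraceChar m (g * (0, 1))
        * Complex.exp (Complex.I * t * ∑ s ∈ univ ×ˢ S, prodTraceChar m (g * s))
      - ∑ g, prodTraceChar m (g * (1, 0))
        * Complex.exp (Complex.I * t * ∑ s ∈ univ ×ˢ S, prodTraceChar m (g * s))
      = 2 * 2 ^ m := by
    rw [← sum_sub_distrib, Fintype.sum_prod_type_right]
    simp_rw [← sub_mul, sum_zmod_two_amplitude_eq_two S hS, sum_const, card_univ,
      card_galoisField hm]
    norm_num [mul_comm]
  have hcard : (Fintype.card (ZMod 2 × GaloisField 2 m) : ℂ) = 2 * 2 ^ m := by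
    rw [Fintype.card_prod, ZMod.card, card_galoisField hm]
    push_cast; rfl
  rw [hasPEST, stdBasis_sub_dotProduct_mulVec]
  simp only [transferMatrix_apply _ isPrimitive_prodTraceChar, Prod.mk_add_mk, add_zero, zero_add,
    CharTwo.add_self_eq_zero]
  rw [show ∀ A B N : ℂ, 1 / 2 * (N⁻¹ * A - N⁻¹ * B - (N⁻¹ * B - N⁻¹ * A)) = N⁻¹ * (A - B) from
    fun _ _ _ => by ring, hsum, hcard,
    inv_mul_cancel₀ (mul_ne_zero two_ne_zero (pow_ne_zero _ two_ne_zero))]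
  simp

end LiftedGraph

lemma cexp_eq_neg_one_of_two_mul_sq {k : ℕ} {l : ℤ} (hl : 2 * l ^ 2 = 2 ^ (2 * k + 1)) :
    Complex.exp (Complex.I * ((Real.pi / 2 ^ (k + 1) : ℝ) : ℂ) * (2 * l)) = -1 := by
  have hsq : l ^ 2 = (2 ^ k) ^ 2 := mul_left_cancel₀ two_ne_zero (by rw [hl]; ring)
  have h2 : (2 : ℂ) ^ (k + 1) ≠ 0 := pow_ne_zero _ two_ne_zero
  rcases sq_eq_sq_iff_eq_or_eq_neg.1 hsq with rfl | rfl
  · rw [← Complex.exp_pi_mul_I]; congr 1; push_cast; field_simp; ring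
  · rw [← Complex.exp_neg_pi_mul_I]; congr 1; push_cast; field_simp; ring

theorem hasPEST_of_semibent {k m e : ℕ} (hm : m = 2 * k + 1)
    (hem : Nat.gcd e m = 1)
    (f : GaloisField 2 m → ZMod 2) (hf : ∀ x, f x = Ftr (x ^ (2 ^ e + 1)))
    (S : Finset (GaloisField 2 m)) (hS : S = univ.filter (fun x => f x = 1))
    (S' : Finset (ZMod 2 × GaloisField 2 m))
    (hS' : S' = (univ : Finset (ZMod 2)) ×ˢ S) :
    S.card = 2 ^ (2 * k) ∧
      hasPEST S' ((0 : ZMod 2), (0 : GaloisField 2 m))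
        ((1 : ZMod 2), (1 : GaloisField 2 m))
        ((0 : ZMod 2), (1 : GaloisField 2 m))
        ((1 : ZMod 2), (0 : GaloisField 2 m))
        (Real.pi / 2 ^ (k + 1)) := by
  subst hm
  have hodd : Odd (2 * k + 1) := odd_two_mul_add_one k
  have hgold : S = goldSupport _ e := by simp only [hS, hf, goldSupport]
  subst hgold hS'
  refine ⟨?_, hasPEST_univ_prod hodd.pos.ne' _ fun y hy => ?_⟩
  · have hcard := two_mul_card_goldSupport hodd hem
    rw [pow_succ] at hcard
    linarith
  · exact cexp_eq_neg_one_of_two_mul_sq (two_mul_lamF_goldSupport_sq hodd hem hy)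

end
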